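/- arXiv:1801.04088 — 6 statements merged into one kernel-verified Lean document; each statement's English description precedes it below -/
import Mathlib

section
/- Green's formula: under Assumption (β), for all finitely supported f, g : V → ℂ one has (Δf, g)_m + conj( (Δg, f)_m ) = Σ_{(x,y)∈E⃗} b(x,y) (f(x) − f(y)) · conj( g(x) − g(y) ). -/
open Function Complex

/-- `β⁺(x) = Σ_y b(x,y)`. -/
noncomputable def betaPlus {V : Type*} (b : V → V → ℝ) (x : V) : ℝ := ∑ᶠ y, b x y

/-- `β⁻(x) = Σ_y b(y,x)`. -/
noncomputable def betaMinus {V : Type*} (b : V → V → ℝ) (x : V) : ℝ := ∑ᶠ y, b y x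

/-- The Laplacian `Δf(x) = (1/m(x)) Σ_y b(x,y)(f(x) - f(y))`. -/
noncomputable def lap {V : Type*} (b : V → V → ℝ) (m : V → ℝ) (f : V → ℂ) (x : V) : ℂ :=
  (1 / (m x : ℂ)) * ∑ᶠ y, (b x y : ℂ) * (f x - f y)

/-- The weighted inner product `(f,g)_w = Σ_x w(x) f(x) conj(g(x))`. -/
noncomputable def innerW {V : Type*} (w : V → ℝ) (f g : V → ℂ) : ℂ :=
  ∑ᶠ x, (w x : ℂ) * f x * (starRingEnd ℂ) (g x)

/-- Green's formula: under Assumption (β), for all finitely supported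
`f, g : V → ℂ` one has
`(Δf, g)_m + conj((Δg, f)_m) = Σ_{(x,y) ∈ E⃗} b(x,y)(f(x) - f(y)) conj(g(x) - g(y))`,
where `E⃗ = {(x,y) : b(x,y) > 0}`. -/
theorem green_formula
    (V : Type*) [Countable V] (b : V → V → ℝ) (m : V → ℝ)
    (hb_nonneg : ∀ x y, 0 ≤ b x y)
    (hb_loop : ∀ x, b x x = 0)
    (hloc_fin : ∀ x, {y | b x y ≠ 0 ∨ b y x ≠ 0}.Finite)
    (hm_pos : ∀ x, 0 < m x)
    (hβp_pos : ∀ x, 0 < betaPlus b x)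
    (hβm_pos : ∀ x, 0 < betaMinus b x)
    (hβ : ∀ x, betaPlus b x = betaMinus b x)
    (f g : V → ℂ) (hf : (support f).Finite) (hg : (support g).Finite) :
    innerW m (lap b m f) g + (starRingEnd ℂ) (innerW m (lap b m g) f)
      = ∑ᶠ (p : V × V) (_ : 0 < b p.1 p.2),
          (b p.1 p.2 : ℂ) * (f p.1 - f p.2) * (starRingEnd ℂ) (g p.1 - g p.2) := by
  classical
  set F : Finset V := hf.toFinset ∪ hg.toFinset with hFdef
  set T : Finset V := F ∪ F.biUnion (fun x => (hloc_fin x).toFinset) with hTdef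
  have hFT : F ⊆ T := Finset.subset_union_left
  have hnb : ∀ x ∈ F, ∀ y, b x y ≠ 0 ∨ b y x ≠ 0 → y ∈ T := by
    intro x hx y hy
    exact Finset.mem_union_right _ (Finset.mem_biUnion.2 ⟨x, hx, (hloc_fin x).mem_toFinset.2 hy⟩)
  have hfF : ∀ x, f x ≠ 0 → x ∈ F := fun x hx =>
    Finset.mem_union_left _ (hf.mem_toFinset.2 hx)
  have hgF : ∀ x, g x ≠ 0 → x ∈ F := fun x hx =>
    Finset.mem_union_right _ (hg.mem_toFinset.2 hx)
  have hm0 : ∀ x, (m x : ℂ) ≠ 0 := fun x => by exact_mod_cast (hm_pos x).ne'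
  -- the two inner products as finite double sums
  have hIn : ∀ u w : V → ℂ, (∀ x, w x ≠ 0 → x ∈ F) →
      innerW m (lap b m u) w
        = ∑ x ∈ T, ∑ y ∈ T, (b x y : ℂ) * (u x - u y) * (starRingEnd ℂ) (w x) := by
    intro u w hw
    unfold innerW lap
    have hsupp : support (fun x => (m x : ℂ) *
        ((1 / (m x : ℂ)) * ∑ᶠ y, (b x y : ℂ) * (u x - u y)) * (starRingEnd ℂ) (w x)) ⊆ ↑T := by
      intro x hx
      simp only [mem_support] at hx
      have hwx : w x ≠ 0 := by
        intro h; apply hx; rw [h]; simp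
      exact hFT (hw x hwx)
    rw [finsum_eq_sum_of_support_subset _ hsupp]
    refine Finset.sum_congr rfl fun x hx => ?_
    by_cases hwx : w x = 0
    · simp [hwx]
    · have hxF := hw x hwx
      have hsy : support (fun y => (b x y : ℂ) * (u x - u y)) ⊆ ↑T := by
        intro y hy
        simp only [mem_support] at hy
        have hb : b x y ≠ 0 := by
          intro h; apply hy; simp [h]
        exact hnb x hxF y (Or.inl hb)
      rw [finsum_eq_sum_of_support_subset _ hsy]
      rw [show (m x : ℂ) * ((1 / (m x : ℂ)) * ∑ y ∈ T, (b x y : ℂ) * (u x - u y))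
          = ∑ y ∈ T, (b x y : ℂ) * (u x - u y) by field_simp; exact mul_div_cancel_left₀ _ (hm0 x)]
      rw [Finset.sum_mul]
  have h1 := hIn f g hgF
  have h2 := hIn g f hfF
  -- RHS as finite double sum
  have hR : (∑ᶠ (p : V × V) (_ : 0 < b p.1 p.2),
        (b p.1 p.2 : ℂ) * (f p.1 - f p.2) * (starRingEnd ℂ) (g p.1 - g p.2))
      = ∑ x ∈ T, ∑ y ∈ T, (b x y : ℂ) * (f x - f y) * (starRingEnd ℂ) (g x - g y) := by
    have hif : ∀ p : V × V, (∑ᶠ _ : 0 < b p.1 p.2,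
        (b p.1 p.2 : ℂ) * (f p.1 - f p.2) * (starRingEnd ℂ) (g p.1 - g p.2))
        = if 0 < b p.1 p.2 then (b p.1 p.2 : ℂ) * (f p.1 - f p.2) * (starRingEnd ℂ) (g p.1 - g p.2) else 0 :=
      fun p => finsum_eq_if
    simp only [hif]
    have hsupp : support (fun p : V × V => if 0 < b p.1 p.2 then
        (b p.1 p.2 : ℂ) * (f p.1 - f p.2) * (starRingEnd ℂ) (g p.1 - g p.2) else 0) ⊆ ↑(T ×ˢ T) := by
      intro p hp
      simp only [mem_support] at hp
      by_cases hb : 0 < b p.1 p.2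
      · rw [if_pos hb] at hp
        have hbne : b p.1 p.2 ≠ 0 := hb.ne'
        have hF1 : p.1 ∈ F ∨ p.2 ∈ F := by
          by_contra hc
          push_neg at hc
          have h1 : f p.1 = 0 := by
            by_contra h; exact hc.1 (hfF _ h)
          have h2 : f p.2 = 0 := by
            by_contra h; exact hc.2 (hfF _ h)
          apply hp; rw [h1, h2]; ring
        have hmem : p.1 ∈ T ∧ p.2 ∈ T := by
          rcases hF1 with h | h
          · exact ⟨hFT h, hnb _ h _ (Or.inl hbne)⟩
          · exact ⟨hnb _ h _ (Or.inr hbne), hFT h⟩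
        simp only [Finset.coe_product, Set.mem_prod]
        exact ⟨hmem.1, hmem.2⟩
      · rw [if_neg hb] at hp; exact absurd rfl hp
    rw [finsum_eq_sum_of_support_subset _ hsupp, ← Finset.sum_product']
    refine Finset.sum_congr rfl fun p hp => ?_
    by_cases hb : 0 < b p.1 p.2
    · rw [if_pos hb]
    · rw [if_neg hb]
      have : b p.1 p.2 = 0 := le_antisymm (not_lt.1 hb) (hb_nonneg _ _)
      rw [this]; simp
  -- the swap identity from assumption (β)
  have hsum_bp : ∀ x ∈ F, (betaPlus b x : ℝ) = ∑ y ∈ T, b x y := by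
    intro x hx
    have : support (fun y => b x y) ⊆ ↑T := fun y hy => hnb x hx y (Or.inl hy)
    exact finsum_eq_sum_of_support_subset _ this
  have hsum_bm : ∀ y ∈ F, (betaMinus b y : ℝ) = ∑ x ∈ T, b x y := by
    intro y hy
    have : support (fun x => b x y) ⊆ ↑T := fun x hx => hnb y hy x (Or.inr hx)
    exact finsum_eq_sum_of_support_subset _ this
  have hswap : ∑ x ∈ T, ∑ y ∈ T, (b x y : ℂ) * (f x * (starRingEnd ℂ) (g x))
      = ∑ x ∈ T, ∑ y ∈ T, (b x y : ℂ) * (f y * (starRingEnd ℂ) (g y)) := by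
    have hL : ∑ x ∈ T, ∑ y ∈ T, (b x y : ℂ) * (f x * (starRingEnd ℂ) (g x))
        = ∑ x ∈ T, (betaPlus b x : ℂ) * (f x * (starRingEnd ℂ) (g x)) := by
      refine Finset.sum_congr rfl fun x hx => ?_
      by_cases hfx : f x = 0
      · simp [hfx]
      · rw [← Finset.sum_mul]
        congr 1
        rw [hsum_bp x (hfF x hfx)]
        push_cast
        rfl
    have hRR : ∑ x ∈ T, ∑ y ∈ T, (b x y : ℂ) * (f y * (starRingEnd ℂ) (g y))
        = ∑ y ∈ T, (betaMinus b y : ℂ) * (f y * (starRingEnd ℂ) (g y)) := by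
      rw [Finset.sum_comm]
      refine Finset.sum_congr rfl fun y hy => ?_
      by_cases hfy : f y = 0
      · simp [hfy]
      · rw [← Finset.sum_mul]
        congr 1
        rw [hsum_bm y (hfF y hfy)]
        push_cast
        rfl
    rw [hL, hRR]
    refine Finset.sum_congr rfl fun x _ => ?_
    rw [hβ x]
  -- conjugate of the second inner product
  have h2' : (starRingEnd ℂ) (innerW m (lap b m g) f)
      = ∑ x ∈ T, ∑ y ∈ T, (b x y : ℂ) * (starRingEnd ℂ) (g x - g y) * f x := by
    rw [h2, map_sum]
    refine Finset.sum_congr rfl fun x _ => ?_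
    rw [map_sum]
    refine Finset.sum_congr rfl fun y _ => ?_
    simp [map_mul, Complex.conj_ofReal, mul_comm]
  rw [h1, h2', hR]
  rw [← Finset.sum_add_distrib]
  have expand : ∀ x y, (b x y : ℂ) * (f x - f y) * (starRingEnd ℂ) (g x)
      + (b x y : ℂ) * (starRingEnd ℂ) (g x - g y) * f x
      = (b x y : ℂ) * (f x - f y) * (starRingEnd ℂ) (g x - g y)
        + ((b x y : ℂ) * (f x * (starRingEnd ℂ) (g x)) - (b x y : ℂ) * (f y * (starRingEnd ℂ) (g y))) := by
    intro x y
    simp only [map_sub]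
    ring
  calc ∑ x ∈ T, (∑ y ∈ T, (b x y : ℂ) * (f x - f y) * (starRingEnd ℂ) (g x)
        + ∑ y ∈ T, (b x y : ℂ) * (starRingEnd ℂ) (g x - g y) * f x)
      = ∑ x ∈ T, ∑ y ∈ T, ((b x y : ℂ) * (f x - f y) * (starRingEnd ℂ) (g x - g y)
        + ((b x y : ℂ) * (f x * (starRingEnd ℂ) (g x)) - (b x y : ℂ) * (f y * (starRingEnd ℂ) (g y)))) := by
        refine Finset.sum_congr rfl fun x _ => ?_
        rw [← Finset.sum_add_distrib]
        exact Finset.sum_congr rfl fun y _ => expand x y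
    _ = ∑ x ∈ T, ∑ y ∈ T, (b x y : ℂ) * (f x - f y) * (starRingEnd ℂ) (g x - g y) := by
        simp only [Finset.sum_add_distrib, Finset.sum_sub_distrib]
        rw [hswap]
        ring
end

section
/- Under Assumption (β), the numerical range of the normalized Laplacian is contained in the closed disc of center 1 and radius 1: for every finitely supported f : V → ℂ with ‖f‖_{β⁺} = 1 one has |(Δ̃f, f)_{β⁺} − 1| ≤ 1. -/
open Function Complex

/-!
Expanding `β⁺(x) Δ̃f(x) = Σ_y b(x,y)(f(x) - f(y))` gives `(Δ̃f, f)_{β⁺} = (f, f)_{β⁺} - A(f)` with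
`A(f) = Σ_{x,y} b(x,y) f(y) conj(f(x))`. Since `b ≥ 0`, the AM-GM inequality
`|f(x)||f(y)| ≤ (|f(x)|² + |f(y)|²)/2` bounds `|A(f)|` by the mean of `Σ_x β⁺(x)|f(x)|²` and
`Σ_y β⁻(y)|f(y)|²`, and under Assumption (β) both are `‖f‖²_{β⁺} = 1`.
-/

theorem norm_mul_conj_le_half_add_sq (z w : ℂ) :
    ‖w * starRingEnd ℂ z‖ ≤ (‖z‖ ^ 2 + ‖w‖ ^ 2) / 2 := by
  rw [norm_mul, RCLike.norm_conj]
  nlinarith [sq_nonneg (‖z‖ - ‖w‖)]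

theorem norm_sum_sum_mul_conj_le {ι : Type*} (s : Finset ι) (b : ι → ι → ℝ)
    (hb : ∀ x y, 0 ≤ b x y) (f : ι → ℂ) :
    ‖∑ x ∈ s, ∑ y ∈ s, (b x y : ℂ) * f y * starRingEnd ℂ (f x)‖
      ≤ ∑ x ∈ s, ∑ y ∈ s, b x y * ((‖f x‖ ^ 2 + ‖f y‖ ^ 2) / 2) := by
  refine (norm_sum_le _ _).trans (Finset.sum_le_sum fun x _ => ?_)
  refine (norm_sum_le _ _).trans (Finset.sum_le_sum fun y _ => ?_)
  rw [mul_assoc, norm_mul, norm_real, Real.norm_of_nonneg (hb x y)]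
  exact mul_le_mul_of_nonneg_left (norm_mul_conj_le_half_add_sq _ _) (hb x y)

section Graph

variable {V : Type*}

theorem innerW_eq_sum (w : V → ℝ) (g f : V → ℂ) {s : Finset V} (hs : support f ⊆ s) :
    innerW w g f = ∑ x ∈ s, (w x : ℂ) * g x * starRingEnd ℂ (f x) :=
  finsum_eq_finsetSum_of_support_subset _ fun x hx => hs fun hfx => hx (by simp [hfx])

theorem innerW_self_eq_sum (w : V → ℝ) (f : V → ℂ) {s : Finset V} (hs : support f ⊆ s) :
    innerW w f f = ((∑ x ∈ s, w x * ‖f x‖ ^ 2 : ℝ) : ℂ) := by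
  rw [innerW_eq_sum w f f hs]
  push_cast
  refine Finset.sum_congr rfl fun x _ => ?_
  rw [mul_assoc, mul_conj, normSq_eq_norm_sq]
  push_cast
  rfl

def IsNbhdOfSupport (b : V → V → ℝ) (f : V → ℂ) (s : Finset V) : Prop :=
  ∀ x, f x ≠ 0 → x ∈ s ∧ ∀ y, b x y ≠ 0 ∨ b y x ≠ 0 → y ∈ s

theorem exists_isNbhdOfSupport {b : V → V → ℝ} (hloc : ∀ x, {y | b x y ≠ 0 ∨ b y x ≠ 0}.Finite)
    {f : V → ℂ} (hf : (support f).Finite) : ∃ s, IsNbhdOfSupport b f s := by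
  have hfin : (support f ∪ ⋃ x ∈ support f, {y | b x y ≠ 0 ∨ b y x ≠ 0}).Finite :=
    hf.union (hf.biUnion fun x _ => hloc x)
  refine ⟨hfin.toFinset, fun x hx => ⟨?_, fun y hy => ?_⟩⟩
  · simp [hx]
  · simp only [Set.Finite.mem_toFinset, Set.mem_union, Set.mem_iUnion]
    exact Or.inr ⟨x, hx, hy⟩

namespace IsNbhdOfSupport

variable {b : V → V → ℝ} {f : V → ℂ} {s : Finset V}

theorem support_subset (hs : IsNbhdOfSupport b f s) : support f ⊆ s :=
  fun x hx => (hs x hx).1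

theorem betaPlus_eq_sum (hs : IsNbhdOfSupport b f s) {x : V} (hx : f x ≠ 0) :
    betaPlus b x = ∑ y ∈ s, b x y :=
  finsum_eq_finsetSum_of_support_subset _ fun y hy => (hs x hx).2 y (Or.inl hy)

theorem betaMinus_eq_sum (hs : IsNbhdOfSupport b f s) {x : V} (hx : f x ≠ 0) :
    betaMinus b x = ∑ y ∈ s, b y x :=
  finsum_eq_finsetSum_of_support_subset _ fun y hy => (hs x hx).2 y (Or.inr hy)

theorem mul_lap_eq_sum (hs : IsNbhdOfSupport b f s) {m : V → ℝ} {x : V} (hm : m x ≠ 0)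
    (hx : f x ≠ 0) :
    (m x : ℂ) * lap b m f x = ∑ y ∈ s, (b x y : ℂ) * (f x - f y) := by
  rw [lap, ← mul_assoc, mul_one_div_cancel (ofReal_ne_zero.mpr hm), one_mul]
  refine finsum_eq_finsetSum_of_support_subset _ fun y hy => (hs x hx).2 y (Or.inl ?_)
  intro hb
  exact hy (by simp [hb])

theorem innerW_lap_self (hs : IsNbhdOfSupport b f s) (hβ : ∀ x, betaPlus b x ≠ 0) :
    innerW (betaPlus b) (lap b (betaPlus b) f) f
      = innerW (betaPlus b) f f - ∑ x ∈ s, ∑ y ∈ s, (b x y : ℂ) * f y * starRingEnd ℂ (f x) := by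
  rw [innerW_eq_sum _ _ _ hs.support_subset, innerW_eq_sum _ _ _ hs.support_subset,
    ← Finset.sum_sub_distrib]
  refine Finset.sum_congr rfl fun x _ => ?_
  by_cases hx : f x = 0
  · simp [hx]
  rw [hs.mul_lap_eq_sum (hβ x) hx, hs.betaPlus_eq_sum hx]
  push_cast
  simp only [Finset.sum_mul, ← Finset.sum_sub_distrib]
  exact Finset.sum_congr rfl fun y _ => by ring

theorem sum_sum_mul_half_add_sq (hs : IsNbhdOfSupport b f s) :
    ∑ x ∈ s, ∑ y ∈ s, b x y * ((‖f x‖ ^ 2 + ‖f y‖ ^ 2) / 2)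
      = (∑ x ∈ s, betaPlus b x * ‖f x‖ ^ 2 + ∑ x ∈ s, betaMinus b x * ‖f x‖ ^ 2) / 2 := by
  have hplus : ∑ x ∈ s, ∑ y ∈ s, b x y * ‖f x‖ ^ 2 = ∑ x ∈ s, betaPlus b x * ‖f x‖ ^ 2 := by
    refine Finset.sum_congr rfl fun x _ => ?_
    by_cases hx : f x = 0
    · simp [hx]
    rw [hs.betaPlus_eq_sum hx, Finset.sum_mul]
  have hminus : ∑ x ∈ s, ∑ y ∈ s, b x y * ‖f y‖ ^ 2 = ∑ y ∈ s, betaMinus b y * ‖f y‖ ^ 2 := by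
    rw [Finset.sum_comm]
    refine Finset.sum_congr rfl fun y _ => ?_
    by_cases hy : f y = 0
    · simp [hy]
    rw [hs.betaMinus_eq_sum hy, Finset.sum_mul]
  rw [← hplus, ← hminus, ← Finset.sum_add_distrib, Finset.sum_div]
  refine Finset.sum_congr rfl fun x _ => ?_
  rw [← Finset.sum_add_distrib, Finset.sum_div]
  exact Finset.sum_congr rfl fun y _ => by ring

end IsNbhdOfSupport

end Graph

theorem numerical_range_in_disc_general
    (V : Type*) (b : V → V → ℝ)
    (hb_nonneg : ∀ x y, 0 ≤ b x y)
    (hloc_fin : ∀ x, {y | b x y ≠ 0 ∨ b y x ≠ 0}.Finite)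
    (hβp_pos : ∀ x, 0 < betaPlus b x)
    (hβ : ∀ x, betaPlus b x = betaMinus b x)
    (f : V → ℂ) (hf : (support f).Finite)
    (hnorm : innerW (betaPlus b) f f = 1) :
    ‖innerW (betaPlus b) (lap b (betaPlus b) f) f - 1‖ ≤ 1 := by
  obtain ⟨s, hs⟩ := exists_isNbhdOfSupport hloc_fin hf
  have hnorm_sum : ∑ x ∈ s, betaPlus b x * ‖f x‖ ^ 2 = 1 := by
    exact_mod_cast (innerW_self_eq_sum _ f hs.support_subset).symm.trans hnorm
  rw [hs.innerW_lap_self fun x => (hβp_pos x).ne', hnorm, sub_sub_cancel_left, norm_neg]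
  calc _ ≤ ∑ x ∈ s, ∑ y ∈ s, b x y * ((‖f x‖ ^ 2 + ‖f y‖ ^ 2) / 2) :=
        norm_sum_sum_mul_conj_le s b hb_nonneg f
    _ = 1 := by
        rw [hs.sum_sum_mul_half_add_sq]
        simp only [← hβ, hnorm_sum]
        norm_num

/-- Under Assumption (β), the numerical range of the normalized Laplacian is
contained in the closed disc of center 1 and radius 1: for every finitely supported
`f : V → ℂ` with `‖f‖_{β⁺} = 1` (equivalently `(f,f)_{β⁺} = 1`) one has
`|(Δ̃f, f)_{β⁺} - 1| ≤ 1`. -/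
theorem numerical_range_in_disc
    (V : Type*) [Countable V] (b : V → V → ℝ)
    (hb_nonneg : ∀ x y, 0 ≤ b x y)
    (hb_loop : ∀ x, b x x = 0)
    (hloc_fin : ∀ x, {y | b x y ≠ 0 ∨ b y x ≠ 0}.Finite)
    (hβp_pos : ∀ x, 0 < betaPlus b x)
    (hβm_pos : ∀ x, 0 < betaMinus b x)
    (hβ : ∀ x, betaPlus b x = betaMinus b x)
    (f : V → ℂ) (hf : (support f).Finite)
    (hnorm : innerW (betaPlus b) f f = 1) :
    ‖innerW (betaPlus b) (lap b (betaPlus b) f) f - 1‖ ≤ 1 :=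
  numerical_range_in_disc_general V b hb_nonneg hloc_fin hβp_pos hβ f hf hnorm
end

section
/- Under Assumption (β), the spectrum of the bounded extension T of the normalized Laplacian Δ̃ to ℓ²(V, β⁺) is contained in the closed disc D(1,1) of center 1 and radius 1 in ℂ. -/
open Function Complex

/-- The isometric identification of `ℓ²(V, w)` with the standard `ℓ²(V)`:
`f ↦ (x ↦ √(w x) · f x)`. -/
noncomputable def weightEmbed {V : Type*} (w : V → ℝ) (f : V → ℂ) : V → ℂ :=
  fun x => (Real.sqrt (w x) : ℂ) * f x

/-! Write `Δ̃ = 1 - P` with `P f(x) = β⁺(x)⁻¹ Σ_y b(x,y) f(y)`; then `σ(T) - 1 = σ(-P)`, so it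
suffices that `P` is a contraction of `ℓ²(V, β⁺)`. By Cauchy–Schwarz,
`β⁺(x) |P f(x)|² ≤ Σ_y b(x,y) |f(y)|²`, and summing over `x` gives `Σ_y β⁻(y) |f(y)|²`, which is
`‖f‖²` by Assumption (β). This holds for finitely supported `f`, which are dense. -/

theorem spectrum_subset_closedBall_norm_sub_mul {𝕜 A : Type*} [NormedField 𝕜] [NormedRing A]
    [NormedAlgebra 𝕜 A] [CompleteSpace A] (a : A) (c : 𝕜) :
    spectrum 𝕜 a ⊆ Metric.closedBall c (‖a - algebraMap 𝕜 A c‖ * ‖(1 : A)‖) := by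
  intro k hk
  have hshift : k - c ∈ spectrum 𝕜 (a - algebraMap 𝕜 A c) := by
    rw [← spectrum.sub_singleton_eq]
    exact Set.sub_mem_sub hk rfl
  simpa [dist_eq_norm] using spectrum.subset_closedBall_norm_mul _ hshift

theorem lp.norm_sq_eq_tsum {α : Type*} {E : α → Type*} [∀ i, NormedAddCommGroup (E i)]
    (u : lp E 2) : ‖u‖ ^ 2 = ∑' i, ‖u i‖ ^ 2 := by
  have h := lp.norm_rpow_eq_tsum (by norm_num : 0 < (2 : ENNReal).toReal) u
  norm_num at h
  exact_mod_cast h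

theorem lp.opNorm_le_of_forall_finite {𝕜 α : Type*} {E : α → Type*} [NontriviallyNormedField 𝕜]
    [∀ i, NormedAddCommGroup (E i)] [∀ i, NormedSpace 𝕜 (E i)] {p : ENNReal} [Fact (1 ≤ p)]
    (hp : p ≠ ⊤) {F : Type*} [SeminormedAddCommGroup F] [NormedSpace 𝕜 F]
    (A : lp E p →L[𝕜] F) {C : ℝ} (hC : 0 ≤ C)
    (h : ∀ u : lp E p, {i | u i ≠ 0}.Finite → ‖A u‖ ≤ C * ‖u‖) : ‖A‖ ≤ C := by
  classical
  refine A.opNorm_le_bound hC fun u => ?_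
  have hclosed : IsClosed {v : lp E p | ‖A v‖ ≤ C * ‖v‖} :=
    isClosed_le A.continuous.norm (continuous_const.mul continuous_norm)
  refine hclosed.mem_of_tendsto (lp.hasSum_single hp u) (.of_forall fun s => h _ ?_)
  refine s.finite_toSet.subset fun i hi => ?_
  by_contra his
  refine hi ?_
  rw [lp.coeFn_sum, Finset.sum_apply]
  exact Finset.sum_eq_zero fun j hj => lp.single_apply_ne p j _ fun hij => his (hij ▸ hj)

section Graph

variable {V : Type*} {b : V → V → ℝ}

noncomputable def transitionOp (b : V → V → ℝ) (f : V → ℂ) (x : V) : ℂ :=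
  (1 / (betaPlus b x : ℂ)) * ∑ᶠ y, (b x y : ℂ) * f y

theorem lap_betaPlus_eq_sub_transitionOp {x : V} (hrow : (support (b x)).Finite)
    (hx : betaPlus b x ≠ 0) (f : V → ℂ) :
    lap b (betaPlus b) f x = f x - transitionOp b f x := by
  have hsupp : ∀ g : V → ℂ, (support fun y => (b x y : ℂ) * g y).Finite := fun g =>
    hrow.subset fun y hy h0 => hy (by simp [h0])
  have hsum : ∑ᶠ y, (b x y : ℂ) = betaPlus b x := (Complex.ofRealHom.map_finsum hrow).symm
  have hx' : (betaPlus b x : ℂ) ≠ 0 := by exact_mod_cast hx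
  simp_rw [lap, transitionOp, mul_sub]
  rw [finsum_sub_distrib (hsupp fun _ => f x) (hsupp f), ← finsum_mul, hsum]
  field_simp

theorem support_transitionOp_finite (hcol : ∀ y, (support (b · y)).Finite) {f : V → ℂ}
    (hf : (support f).Finite) : (support (transitionOp b f)).Finite := by
  refine (hf.biUnion fun y _ => hcol y).subset fun x hx => ?_
  have hsum : ∑ᶠ y, (b x y : ℂ) * f y ≠ 0 := right_ne_zero_of_mul hx
  obtain ⟨y, hy⟩ : ∃ y, (b x y : ℂ) * f y ≠ 0 :=
    not_forall.1 fun h => hsum (finsum_eq_zero_of_forall_eq_zero h)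
  exact Set.mem_biUnion (right_ne_zero_of_mul hy) (by exact_mod_cast left_ne_zero_of_mul hy)

theorem betaPlus_mul_norm_transitionOp_sq_le {x : V} (hb : ∀ y, 0 ≤ b x y)
    (hrow : (support (b x)).Finite) (hx : 0 < betaPlus b x) (f : V → ℂ) :
    betaPlus b x * ‖transitionOp b f x‖ ^ 2 ≤ ∑ᶠ y, b x y * ‖f y‖ ^ 2 := by
  set s := hrow.toFinset
  have hsC : support (fun y => (b x y : ℂ) * f y) ⊆ s := fun y hy => by
    simpa [s] using left_ne_zero_of_mul hy
  have hsR : support (fun y => b x y * ‖f y‖ ^ 2) ⊆ s := fun y hy => by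
    simpa [s] using left_ne_zero_of_mul hy
  set N := ∑ y ∈ s, b x y * ‖f y‖
  have hβ : betaPlus b x = ∑ y ∈ s, b x y := finsum_eq_sum_of_support_subset _ (by simp [s])
  have hnorm : ‖∑ y ∈ s, (b x y : ℂ) * f y‖ ≤ N := (norm_sum_le _ _).trans_eq <|
    Finset.sum_congr rfl fun y _ => by simp [abs_of_nonneg (hb y)]
  have hCS : N ^ 2 ≤ betaPlus b x * ∑ y ∈ s, b x y * ‖f y‖ ^ 2 := hβ ▸
    Finset.sum_sq_le_sum_mul_sum_of_sq_le_mul _ (fun y _ => hb y)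
      (fun y _ => mul_nonneg (hb y) (sq_nonneg _)) fun y _ => le_of_eq (by ring)
  rw [transitionOp, finsum_eq_sum_of_support_subset _ hsC, finsum_eq_sum_of_support_subset _ hsR,
    norm_mul, norm_div, norm_one, Complex.norm_real, Real.norm_of_nonneg hx.le]
  calc betaPlus b x * (1 / betaPlus b x * ‖∑ y ∈ s, (b x y : ℂ) * f y‖) ^ 2
      = ‖∑ y ∈ s, (b x y : ℂ) * f y‖ ^ 2 / betaPlus b x := by field_simp
    _ ≤ N ^ 2 / betaPlus b x := by gcongr
    _ ≤ ∑ y ∈ s, b x y * ‖f y‖ ^ 2 := by rw [div_le_iff₀ hx]; linarith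

theorem tsum_betaPlus_mul_norm_transitionOp_sq_le (hb : ∀ x y, 0 ≤ b x y)
    (hrow : ∀ x, (support (b x)).Finite) (hcol : ∀ y, (support (b · y)).Finite)
    (hpos : ∀ x, 0 < betaPlus b x) (hβ : ∀ x, betaPlus b x = betaMinus b x)
    {f : V → ℂ} (hf : (support f).Finite) :
    ∑' x, betaPlus b x * ‖transitionOp b f x‖ ^ 2 ≤ ∑' x, betaPlus b x * ‖f x‖ ^ 2 := by
  set S := hf.toFinset
  have hS : ∀ x, support (fun y => b x y * ‖f y‖ ^ 2) ⊆ S := fun x y hy => by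
    simpa [S] using right_ne_zero_of_mul hy
  have hbound : ∀ x, betaPlus b x * ‖transitionOp b f x‖ ^ 2 ≤ ∑ y ∈ S, b x y * ‖f y‖ ^ 2 :=
    fun x => finsum_eq_sum_of_support_subset _ (hS x) ▸
      betaPlus_mul_norm_transitionOp_sq_le (hb x) (hrow x) (hpos x) f
  have hcolsum : ∀ y, HasSum (fun x => b x y) (betaMinus b y) := fun y => by
    rw [betaMinus, ← tsum_eq_finsum (L := .unconditional V) (hcol y)]
    exact (summable_of_hasFiniteSupport (hcol y)).hasSum
  have hswap : HasSum (fun x => ∑ y ∈ S, b x y * ‖f y‖ ^ 2)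
      (∑ y ∈ S, betaMinus b y * ‖f y‖ ^ 2) :=
    hasSum_sum fun y _ => (hcolsum y).mul_right _
  calc ∑' x, betaPlus b x * ‖transitionOp b f x‖ ^ 2
      ≤ ∑' x, ∑ y ∈ S, b x y * ‖f y‖ ^ 2 :=
        Summable.tsum_le_tsum hbound (hswap.summable.of_nonneg_of_le
          (fun x => mul_nonneg (hpos x).le (sq_nonneg _)) hbound) hswap.summable
    _ = ∑ y ∈ S, betaPlus b y * ‖f y‖ ^ 2 := by simp only [hswap.tsum_eq, hβ]
    _ = ∑' y, betaPlus b y * ‖f y‖ ^ 2 :=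
        (tsum_eq_sum fun y hy => by simp [S, Set.Finite.mem_toFinset] at hy; simp [hy]).symm

theorem norm_sq_eq_tsum_of_coe_eq_weightEmbed {w : V → ℝ} (hw : ∀ x, 0 ≤ w x) {f : V → ℂ}
    {u : lp (fun _ : V => ℂ) 2} (hu : ⇑u = weightEmbed w f) :
    ‖u‖ ^ 2 = ∑' x, w x * ‖f x‖ ^ 2 := by
  simp [lp.norm_sq_eq_tsum, hu, weightEmbed, mul_pow, Real.sq_sqrt (hw _)]

def ExtendsNormalizedLap (b : V → V → ℝ)
    (T : lp (fun _ : V => ℂ) 2 →L[ℂ] lp (fun _ : V => ℂ) 2) : Prop :=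
  ∀ (f : V → ℂ), (support f).Finite →
    ∀ u v : lp (fun _ : V => ℂ) 2,
      (↑u : V → ℂ) = weightEmbed (betaPlus b) f →
      (↑v : V → ℂ) = weightEmbed (betaPlus b) (lap b (betaPlus b) f) →
      T u = v

theorem norm_apply_sub_self_le_of_finite (hb : ∀ x y, 0 ≤ b x y)
    (hrow : ∀ x, (support (b x)).Finite) (hcol : ∀ y, (support (b · y)).Finite)
    (hpos : ∀ x, 0 < betaPlus b x) (hβ : ∀ x, betaPlus b x = betaMinus b x)
    {T : lp (fun _ : V => ℂ) 2 →L[ℂ] lp (fun _ : V => ℂ) 2} (hT : ExtendsNormalizedLap b T)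
    {u : lp (fun _ : V => ℂ) 2} (hu : {x | u x ≠ 0}.Finite) : ‖T u - u‖ ≤ ‖u‖ := by
  set f : V → ℂ := fun x => u x / Real.sqrt (betaPlus b x)
  have hsqrt : ∀ x, (Real.sqrt (betaPlus b x) : ℂ) ≠ 0 := fun x => by
    exact_mod_cast (Real.sqrt_pos.2 (hpos x)).ne'
  have hu_eq : ⇑u = weightEmbed (betaPlus b) f :=
    funext fun x => (mul_div_cancel₀ _ (hsqrt x)).symm
  have hf : (support f).Finite := hu.subset fun x hx h0 => hx (by simp [f, h0])
  set g := weightEmbed (betaPlus b) (transitionOp b f)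
  have hg : {x | g x ≠ 0}.Finite :=
    (support_transitionOp_finite hcol hf).subset fun x hx => right_ne_zero_of_mul hx
  set w : lp (fun _ : V => ℂ) 2 := ⟨g, (memℓp_zero hg).of_exponent_ge zero_le⟩
  have hTu : T u = u - w := hT f hf u (u - w) hu_eq <| funext fun x => by
    change u x - g x = _
    simp only [hu_eq, g, weightEmbed]
    rw [lap_betaPlus_eq_sub_transitionOp (hrow x) (hpos x).ne', mul_sub]
  have hnonneg : ∀ x, 0 ≤ betaPlus b x := fun x => (hpos x).le
  rw [hTu, sub_sub_cancel_left, norm_neg, ← sq_le_sq₀ (norm_nonneg _) (norm_nonneg _),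
    norm_sq_eq_tsum_of_coe_eq_weightEmbed hnonneg rfl,
    norm_sq_eq_tsum_of_coe_eq_weightEmbed hnonneg hu_eq]
  exact tsum_betaPlus_mul_norm_transitionOp_sq_le hb hrow hcol hpos hβ hf

end Graph

theorem spectrum_in_disc_general
    (V : Type*) (b : V → V → ℝ)
    (hb_nonneg : ∀ x y, 0 ≤ b x y)
    (hloc_fin : ∀ x, {y | b x y ≠ 0 ∨ b y x ≠ 0}.Finite)
    (hβp_pos : ∀ x, 0 < betaPlus b x)
    (hβ : ∀ x, betaPlus b x = betaMinus b x)
    (T : lp (fun _ : V => ℂ) 2 →L[ℂ] lp (fun _ : V => ℂ) 2)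
    (hT : ∀ (f : V → ℂ), (support f).Finite →
      ∀ u v : lp (fun _ : V => ℂ) 2,
        (↑u : V → ℂ) = weightEmbed (betaPlus b) f →
        (↑v : V → ℂ) = weightEmbed (betaPlus b) (lap b (betaPlus b) f) →
        T u = v) :
    spectrum ℂ T ⊆ Metric.closedBall (1 : ℂ) 1 := by
  have hrow : ∀ x, (support (b x)).Finite := fun x => (hloc_fin x).subset fun _ => Or.inl
  have hcol : ∀ y, (support (b · y)).Finite := fun y => (hloc_fin y).subset fun _ => Or.inr
  have hT1 : ‖T - 1‖ ≤ 1 := lp.opNorm_le_of_forall_finite (by norm_num) _ zero_le_one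
    fun u hu => by simpa using norm_apply_sub_self_le_of_finite hb_nonneg hrow hcol hβp_pos hβ hT hu
  refine (spectrum_subset_closedBall_norm_sub_mul T 1).trans
    (Metric.closedBall_subset_closedBall ?_)
  rw [map_one]
  exact mul_le_one₀ hT1 (norm_nonneg _) ContinuousLinearMap.norm_id_le

/-- Under Assumption (β), the spectrum of the bounded extension `T` of the
normalized Laplacian `Δ̃` to `ℓ²(V, β⁺)` (realized as the standard `ℓ²(V)` via the
isometry `f ↦ √β⁺ · f`) is contained in the closed disc `D(1,1)` in `ℂ`. -/
theorem spectrum_in_disc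
    (V : Type*) [Countable V] (b : V → V → ℝ)
    (hb_nonneg : ∀ x y, 0 ≤ b x y)
    (hb_loop : ∀ x, b x x = 0)
    (hloc_fin : ∀ x, {y | b x y ≠ 0 ∨ b y x ≠ 0}.Finite)
    (hβp_pos : ∀ x, 0 < betaPlus b x)
    (hβm_pos : ∀ x, 0 < betaMinus b x)
    (hβ : ∀ x, betaPlus b x = betaMinus b x)
    (T : lp (fun _ : V => ℂ) 2 →L[ℂ] lp (fun _ : V => ℂ) 2)
    (hT : ∀ (f : V → ℂ), (support f).Finite →
      ∀ u v : lp (fun _ : V => ℂ) 2,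
        (↑u : V → ℂ) = weightEmbed (betaPlus b) f →
        (↑v : V → ℂ) = weightEmbed (betaPlus b) (lap b (betaPlus b) f) →
        T u = v) :
    spectrum ℂ T ⊆ Metric.closedBall (1 : ℂ) 1 :=
  spectrum_in_disc_general V b hb_nonneg hloc_fin hβp_pos hβ T hT
end

section
/- Suppose the graph is connected and Assumption (β) holds, and let Ω ⊆ V be finite, nonempty and Ω ≠ V. Then every eigenvalue λ of the Dirichlet normalized Laplacian Δ̃^D_Ω satisfies Re λ > 0, and there exists an eigenvalue λ of Δ̃^D_Ω with Re λ ≤ 1. -/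
/-!
Extend an eigenfunction `f` by zero. The real part of `⟨Δ̃^D_Ω f, f⟩` (weights `β⁺`) is half
of `Σ b(x,y) |f(x) - f(y)|² + Σ β⁺ |f|² - Σ β⁻ |f|²`, and by (β) the last two sums cancel.
The remaining energy is positive: `f ≠ 0` vanishes somewhere outside `Ω`, so by connectedness
some edge carries two different values. Hence `Re λ · ‖f‖² > 0`. For the second part, the
matrix of `Δ̃^D_Ω` has ones on the diagonal since there are no loops, so its eigenvalues sum
to `|Ω|` and one of them has real part at most `1`.
-/

open Function Complex

/-- The graph is connected: any two vertices are joined by a chain of edges (in either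
direction). -/
def GraphConnected {V : Type*} (b : V → V → ℝ) : Prop :=
  ∀ x y : V, ∃ (k : ℕ) (c : ℕ → V), c 0 = x ∧ c k = y ∧
    ∀ i < k, 0 < b (c i) (c (i + 1)) + b (c (i + 1)) (c i)

/-- Extension by zero of a function on `Ω` to all of `V`. -/
noncomputable def extendZero {V : Type*} [DecidableEq V] (Ω : Finset V) (f : ↥Ω → ℂ) :
    V → ℂ :=
  fun x => if h : x ∈ Ω then f ⟨x, h⟩ else 0

/-- The Dirichlet normalized Laplacian on a finite set `Ω`:
`(Δ̃^D_Ω f)(x) = (1/β⁺(x)) Σ_y b(x,y)(f̃(x) − f̃(y))` where `f̃` extends `f` by zero. -/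
noncomputable def dirichletLap {V : Type*} [DecidableEq V] (b : V → V → ℝ) (w : V → ℝ)
    (Ω : Finset V) (f : ↥Ω → ℂ) (x : ↥Ω) : ℂ :=
  (1 / (w (x : V) : ℂ)) *
    ∑ᶠ y : V, (b (x : V) y : ℂ) * (extendZero Ω f (x : V) - extendZero Ω f y)

/-- The weighted inner product on functions on the finite set `Ω`. -/
noncomputable def innerF {V : Type*} (w : V → ℝ) (Ω : Finset V) (f g : ↥Ω → ℂ) : ℂ :=
  ∑ x : ↥Ω, (w (x : V) : ℂ) * f x * (starRingEnd ℂ) (g x)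

open scoped Matrix

theorem Multiset.exists_mem_card_mul_re_le_re_sum {s : Multiset ℂ} (hs : s ≠ 0) :
    ∃ z ∈ s, (card s : ℝ) * z.re ≤ s.sum.re := by
  obtain ⟨z, hz, hmin⟩ := s.toFinset.exists_min_image re (Multiset.toFinset_nonempty.2 hs)
  refine ⟨z, Multiset.mem_toFinset.1 hz, ?_⟩
  have hle := Multiset.card_nsmul_le_sum (s := s.map re) (a := z.re)
    (by simpa using fun w hw => hmin w (Multiset.mem_toFinset.2 hw))
  rw [Multiset.card_map, nsmul_eq_mul] at hle
  exact hle.trans_eq (map_multiset_sum reAddGroupHom s).symm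

theorem Matrix.exists_mulVec_eq_smul_card_mul_re_le_re_trace {n : Type*} [Fintype n]
    [DecidableEq n] [Nonempty n] (A : Matrix n n ℂ) :
    ∃ (μ : ℂ) (v : n → ℂ), v ≠ 0 ∧ A *ᵥ v = μ • v ∧
      (Fintype.card n : ℝ) * μ.re ≤ A.trace.re := by
  have hcard : Multiset.card A.charpoly.roots = Fintype.card n := by
    rw [Polynomial.splits_iff_card_roots.1 (IsAlgClosed.splits A.charpoly),
      A.charpoly_natDegree_eq_dim]
  obtain ⟨μ, hμ, hle⟩ := Multiset.exists_mem_card_mul_re_le_re_sum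
    (s := A.charpoly.roots) (by rw [← Multiset.card_pos, hcard]; exact Fintype.card_pos)
  have heig : Module.End.HasEigenvalue (Matrix.toLin' A) μ := by
    rw [Module.End.hasEigenvalue_iff_isRoot_charpoly, Matrix.charpoly_toLin']
    exact Polynomial.isRoot_of_mem_roots hμ
  obtain ⟨v, hv, hv0⟩ := heig.exists_hasEigenvector
  refine ⟨μ, v, hv0, by simpa using Module.End.mem_eigenspace_iff.1 hv, ?_⟩
  rwa [A.trace_eq_sum_roots_charpoly, ← hcard]

theorem GraphConnected.exists_adj_ne {V α : Type*} {b : V → V → ℝ} (hconn : GraphConnected b)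
    (g : V → α) {x y : V} (hxy : g x ≠ g y) :
    ∃ z w, 0 < b z w + b w z ∧ g z ≠ g w := by
  obtain ⟨k, c, rfl, rfl, hstep⟩ := hconn x y
  by_contra! hconst
  have hchain : ∀ i ≤ k, g (c i) = g (c 0) := by
    intro i
    induction i with
    | zero => exact fun _ => rfl
    | succ i ih =>
      intro hik
      rw [← ih (by omega), hconst _ _ (hstep i hik)]
  exact hxy (hchain k le_rfl).symm

section ClosedNbhd

variable {V : Type*} {b : V → V → ℝ}

/-- A finite window on which every `∑ᶠ` in `betaPlus`, `betaMinus` and `dirichletLap` at points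
of `Ω` becomes a `Finset` sum. -/
def ClosedNbhdSubset (b : V → V → ℝ) (Ω S : Finset V) : Prop :=
  Ω ⊆ S ∧ ∀ x ∈ Ω, ∀ y, b x y ≠ 0 ∨ b y x ≠ 0 → y ∈ S

theorem exists_closedNbhdSubset (hloc : ∀ x, {y | b x y ≠ 0 ∨ b y x ≠ 0}.Finite)
    (Ω : Finset V) : ∃ S, ClosedNbhdSubset b Ω S := by
  classical
  refine ⟨Ω ∪ Ω.biUnion fun x => (hloc x).toFinset, Finset.subset_union_left,
    fun x hx y hy => Finset.mem_union_right _ (Finset.mem_biUnion.2 ⟨x, hx, ?_⟩)⟩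
  exact (hloc x).mem_toFinset.2 hy

theorem ClosedNbhdSubset.betaPlus_eq_sum {Ω S : Finset V} (hS : ClosedNbhdSubset b Ω S)
    {x : V} (hx : x ∈ Ω) : betaPlus b x = ∑ y ∈ S, b x y :=
  finsum_eq_sum_of_support_subset _ fun y hy => hS.2 x hx y (Or.inl hy)

theorem ClosedNbhdSubset.betaMinus_eq_sum {Ω S : Finset V} (hS : ClosedNbhdSubset b Ω S)
    {y : V} (hy : y ∈ Ω) : betaMinus b y = ∑ x ∈ S, b x y :=
  finsum_eq_sum_of_support_subset _ fun x hx => hS.2 y hy x (Or.inr hx)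

end ClosedNbhd

theorem two_mul_re_sum_sum_mul_conj {V : Type*} (S : Finset V) (b : V → V → ℝ) (g : V → ℂ) :
    2 * (∑ x ∈ S, ∑ y ∈ S, (b x y : ℂ) * (g x - g y) * (starRingEnd ℂ) (g x)).re
      = ∑ x ∈ S, ∑ y ∈ S, b x y * normSq (g x - g y)
        + (∑ x ∈ S, ∑ y ∈ S, b x y * normSq (g x) - ∑ x ∈ S, ∑ y ∈ S, b x y * normSq (g y)) := by
  have hterm : ∀ (r : ℝ) (u v : ℂ), 2 * ((r : ℂ) * (u - v) * (starRingEnd ℂ) u).re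
      = r * normSq (u - v) + (r * normSq u - r * normSq v) := by
    intro r u v
    simp only [normSq_apply, mul_re, mul_im, sub_re, sub_im, conj_re, conj_im, ofReal_re,
      ofReal_im]
    ring
  simp only [re_sum, Finset.mul_sum, hterm, Finset.sum_add_distrib, Finset.sum_sub_distrib]

theorem sum_mul_normSq_pos {ι : Type*} [Fintype ι] {w : ι → ℝ} (hw : ∀ i, 0 < w i)
    {f : ι → ℂ} (hf : f ≠ 0) : 0 < ∑ i, w i * normSq (f i) := by
  obtain ⟨i, hi⟩ := Function.ne_iff.1 hf
  exact Finset.sum_pos' (fun j _ => mul_nonneg (hw j).le (normSq_nonneg _))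
    ⟨i, Finset.mem_univ i, mul_pos (hw i) (normSq_pos.2 hi)⟩

section Energy

variable {V : Type*} {b : V → V → ℝ}

theorem sum_sum_mul_normSq_sub_pos_of_pos (hb : ∀ x y, 0 ≤ b x y) {S : Finset V} {g : V → ℂ}
    {x y : V} (hx : x ∈ S) (hy : y ∈ S) (hxy : 0 < b x y) (hne : g x ≠ g y) :
    0 < ∑ x ∈ S, ∑ y ∈ S, b x y * normSq (g x - g y) := by
  have hnonneg : ∀ x' y', 0 ≤ b x' y' * normSq (g x' - g y') :=
    fun x' y' => mul_nonneg (hb x' y') (normSq_nonneg _)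
  exact Finset.sum_pos' (fun x' _ => Finset.sum_nonneg fun y' _ => hnonneg x' y')
    ⟨x, hx, Finset.sum_pos' (fun y' _ => hnonneg x y')
      ⟨y, hy, mul_pos hxy (normSq_pos.2 (sub_ne_zero.2 hne))⟩⟩

theorem ClosedNbhdSubset.sum_sum_mul_normSq_sub_pos_of_adj (hb : ∀ x y, 0 ≤ b x y)
    {Ω S : Finset V} (hS : ClosedNbhdSubset b Ω S) {g : V → ℂ} {x y : V} (hx : x ∈ Ω)
    (hxy : 0 < b x y + b y x) (hne : g x ≠ g y) :
    0 < ∑ x ∈ S, ∑ y ∈ S, b x y * normSq (g x - g y) := by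
  have hyS : y ∈ S := by
    refine hS.2 x hx y ?_
    by_contra! h0
    rw [h0.1, h0.2, add_zero] at hxy
    exact lt_irrefl _ hxy
  by_cases hxy' : 0 < b x y
  · exact sum_sum_mul_normSq_sub_pos_of_pos hb (hS.1 hx) hyS hxy' hne
  · exact sum_sum_mul_normSq_sub_pos_of_pos hb hyS (hS.1 hx) (by linarith) hne.symm

theorem ClosedNbhdSubset.sum_sum_mul_normSq_sub_pos (hb : ∀ x y, 0 ≤ b x y)
    (hconn : GraphConnected b) {Ω S : Finset V} (hS : ClosedNbhdSubset b Ω S) (hΩ : ∃ v, v ∉ Ω)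
    {g : V → ℂ} (hg : ∀ x ∉ Ω, g x = 0) (hg0 : g ≠ 0) :
    0 < ∑ x ∈ S, ∑ y ∈ S, b x y * normSq (g x - g y) := by
  obtain ⟨u, hu⟩ := Function.ne_iff.1 hg0
  obtain ⟨v, hv⟩ := hΩ
  obtain ⟨z, w, hzw, hne⟩ := hconn.exists_adj_ne g (x := u) (y := v) (by rwa [hg v hv])
  have hmem : ∀ x, g x ≠ 0 → x ∈ Ω := fun x hx => by_contra fun h => hx (hg x h)
  by_cases hz : g z = 0
  · exact hS.sum_sum_mul_normSq_sub_pos_of_adj hb (hmem w (hz ▸ hne.symm)) (by rwa [add_comm])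
      hne.symm
  · exact hS.sum_sum_mul_normSq_sub_pos_of_adj hb (hmem z hz) hzw hne

theorem ClosedNbhdSubset.sum_sum_mul_normSq_left_eq_right
    (hβ : ∀ x, betaPlus b x = betaMinus b x) {Ω S : Finset V} (hS : ClosedNbhdSubset b Ω S)
    {g : V → ℂ} (hg : ∀ x ∉ Ω, g x = 0) :
    ∑ x ∈ S, ∑ y ∈ S, b x y * normSq (g x) = ∑ x ∈ S, ∑ y ∈ S, b x y * normSq (g y) := by
  have hrow : ∀ x ∈ S, (∑ y ∈ S, b x y) * normSq (g x) = betaPlus b x * normSq (g x) := by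
    intro x _
    by_cases hx : x ∈ Ω
    · rw [hS.betaPlus_eq_sum hx]
    · simp [hg x hx]
  have hcol : ∀ y ∈ S, (∑ x ∈ S, b x y) * normSq (g y) = betaMinus b y * normSq (g y) := by
    intro y _
    by_cases hy : y ∈ Ω
    · rw [hS.betaMinus_eq_sum hy]
    · simp [hg y hy]
  calc ∑ x ∈ S, ∑ y ∈ S, b x y * normSq (g x)
      = ∑ x ∈ S, betaPlus b x * normSq (g x) := by
        simp only [← Finset.sum_mul]
        exact Finset.sum_congr rfl hrow
    _ = ∑ y ∈ S, betaMinus b y * normSq (g y) := by simp only [hβ]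
    _ = ∑ x ∈ S, ∑ y ∈ S, b x y * normSq (g y) := by
        rw [Finset.sum_comm]
        simp only [← Finset.sum_mul]
        exact (Finset.sum_congr rfl hcol).symm

end Energy

section InnerProduct

variable {V : Type*} {Ω : Finset V}

theorem innerF_smul_left (w : V → ℝ) (c : ℂ) (f g : ↥Ω → ℂ) :
    innerF w Ω (c • f) g = c * innerF w Ω f g := by
  simp only [innerF, Pi.smul_apply, smul_eq_mul, Finset.mul_sum]
  exact Finset.sum_congr rfl fun x _ => by ring

theorem innerF_self (w : V → ℝ) (f : ↥Ω → ℂ) :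
    innerF w Ω f f = ((∑ x : ↥Ω, w x * normSq (f x) : ℝ) : ℂ) := by
  simp only [innerF, mul_assoc, mul_conj]
  push_cast
  rfl

end InnerProduct

section Laplacian

variable {V : Type*} [DecidableEq V] {b : V → V → ℝ} {Ω S : Finset V}

@[simp]
theorem extendZero_coe (f : ↥Ω → ℂ) (x : ↥Ω) : extendZero Ω f x = f x := by
  simp [extendZero]

theorem extendZero_of_notMem (f : ↥Ω → ℂ) {x : V} (hx : x ∉ Ω) : extendZero Ω f x = 0 := by
  simp [extendZero, hx]

theorem extendZero_ne_zero {f : ↥Ω → ℂ} (hf : f ≠ 0) : extendZero Ω f ≠ 0 := fun h =>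
  hf (funext fun x => by simpa using congrFun h x)

theorem sum_mul_extendZero (hΩS : Ω ⊆ S) (c : V → ℂ) (f : ↥Ω → ℂ) :
    ∑ y ∈ S, c y * extendZero Ω f y = ∑ y : ↥Ω, c y * f y := by
  rw [← Finset.sum_subset hΩS fun y _ hy => by simp [extendZero_of_notMem f hy],
    ← Finset.sum_coe_sort]
  simp

theorem ClosedNbhdSubset.dirichletLap_eq_sum (hS : ClosedNbhdSubset b Ω S) (w : V → ℝ)
    (f : ↥Ω → ℂ) (x : ↥Ω) :
    dirichletLap b w Ω f x
      = 1 / w x * ∑ y ∈ S, b x y * (extendZero Ω f x - extendZero Ω f y) := by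
  rw [dirichletLap, finsum_eq_sum_of_support_subset]
  intro y hy
  exact hS.2 x x.2 y (Or.inl fun h => hy (by simp [h]))

theorem ClosedNbhdSubset.innerF_dirichletLap_eq_sum (hS : ClosedNbhdSubset b Ω S) {w : V → ℝ}
    (hw : ∀ x ∈ Ω, w x ≠ 0) (f : ↥Ω → ℂ) :
    innerF w Ω (dirichletLap b w Ω f) f
      = ∑ x ∈ S, ∑ y ∈ S, (b x y : ℂ) * (extendZero Ω f x - extendZero Ω f y)
          * (starRingEnd ℂ) (extendZero Ω f x) := by
  have hterm : ∀ x : ↥Ω, (w x : ℂ) * dirichletLap b w Ω f x * (starRingEnd ℂ) (f x)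
      = ∑ y ∈ S, (b x y : ℂ) * (extendZero Ω f x - extendZero Ω f y)
          * (starRingEnd ℂ) (extendZero Ω f x) := by
    intro x
    have hwx : (w x : ℂ) ≠ 0 := by exact_mod_cast hw x x.2
    rw [hS.dirichletLap_eq_sum, extendZero_coe, ← mul_assoc, mul_one_div_cancel hwx, one_mul,
      Finset.sum_mul]
  rw [innerF, Finset.sum_congr rfl fun x _ => hterm x,
    Finset.sum_coe_sort Ω fun x => ∑ y ∈ S, (b x y : ℂ) * (extendZero Ω f x - extendZero Ω f y)
      * (starRingEnd ℂ) (extendZero Ω f x)]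
  exact Finset.sum_subset hS.1 fun x _ hx => by simp [extendZero_of_notMem f hx]

theorem ClosedNbhdSubset.re_innerF_dirichletLap_pos (hb : ∀ x y, 0 ≤ b x y)
    (hβp : ∀ x ∈ Ω, betaPlus b x ≠ 0) (hβ : ∀ x, betaPlus b x = betaMinus b x)
    (hconn : GraphConnected b) (hS : ClosedNbhdSubset b Ω S) (hΩ : ∃ v, v ∉ Ω)
    {f : ↥Ω → ℂ} (hf : f ≠ 0) :
    0 < (innerF (betaPlus b) Ω (dirichletLap b (betaPlus b) Ω f) f).re := by
  have hg : ∀ x ∉ Ω, extendZero Ω f x = 0 := fun x => extendZero_of_notMem f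
  have hre := two_mul_re_sum_sum_mul_conj S b (extendZero Ω f)
  rw [hS.sum_sum_mul_normSq_left_eq_right hβ hg, sub_self, add_zero] at hre
  rw [hS.innerF_dirichletLap_eq_sum hβp]
  linarith [hS.sum_sum_mul_normSq_sub_pos hb hconn hΩ hg (extendZero_ne_zero hf)]

noncomputable def dirichletMatrix (b : V → V → ℝ) (Ω : Finset V) : Matrix ↥Ω ↥Ω ℂ :=
  1 - Matrix.of fun x y : ↥Ω => ((b x y / betaPlus b x : ℝ) : ℂ)

theorem trace_dirichletMatrix (hb_loop : ∀ x, b x x = 0) :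
    (dirichletMatrix b Ω).trace = Fintype.card ↥Ω := by
  simp [dirichletMatrix, Matrix.trace, hb_loop]

theorem ClosedNbhdSubset.dirichletLap_eq_mulVec (hS : ClosedNbhdSubset b Ω S)
    (hβp : ∀ x ∈ Ω, betaPlus b x ≠ 0) (f : ↥Ω → ℂ) :
    dirichletLap b (betaPlus b) Ω f = dirichletMatrix b Ω *ᵥ f := by
  funext x
  have hβx : (betaPlus b x : ℂ) ≠ 0 := by exact_mod_cast hβp x x.2
  have hsum : ∑ y ∈ S, (b x y : ℂ) * (extendZero Ω f x - extendZero Ω f y)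
      = betaPlus b x * f x - ∑ y : ↥Ω, (b x y : ℂ) * f y := by
    simp only [mul_sub, Finset.sum_sub_distrib, ← Finset.sum_mul, sum_mul_extendZero hS.1,
      extendZero_coe, hS.betaPlus_eq_sum x.2]
    push_cast
    rfl
  rw [hS.dirichletLap_eq_sum, hsum, dirichletMatrix, Matrix.sub_mulVec, Matrix.one_mulVec]
  simp only [Pi.sub_apply, Matrix.mulVec, dotProduct, Matrix.of_apply]
  rw [mul_sub, ← mul_assoc, one_div_mul_cancel hβx, one_mul, Finset.mul_sum]
  congr 1
  refine Finset.sum_congr rfl fun y _ => ?_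
  push_cast
  ring

end Laplacian

theorem dirichlet_eigenvalue_re_pos_and_exists_le_one_general
    (V : Type*) [DecidableEq V] (b : V → V → ℝ)
    (hb_nonneg : ∀ x y, 0 ≤ b x y)
    (hb_loop : ∀ x, b x x = 0)
    (hloc_fin : ∀ x, {y | b x y ≠ 0 ∨ b y x ≠ 0}.Finite)
    (hβp_pos : ∀ x, 0 < betaPlus b x)
    (hβ : ∀ x, betaPlus b x = betaMinus b x)
    (hconn : GraphConnected b)
    (Ω : Finset V) (hΩ : Ω.Nonempty) (hΩne : ∃ v : V, v ∉ Ω) :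
    (∀ (lam : ℂ) (f : ↥Ω → ℂ), f ≠ 0 →
        (∀ x : ↥Ω, dirichletLap b (betaPlus b) Ω f x = lam * f x) → 0 < lam.re) ∧
    (∃ (lam : ℂ) (f : ↥Ω → ℂ), f ≠ 0 ∧
        (∀ x : ↥Ω, dirichletLap b (betaPlus b) Ω f x = lam * f x) ∧ lam.re ≤ 1) := by
  obtain ⟨S, hS⟩ := exists_closedNbhdSubset hloc_fin Ω
  have hβp : ∀ x ∈ Ω, betaPlus b x ≠ 0 := fun x _ => (hβp_pos x).ne'
  constructor
  · intro lam f hf hef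
    have hpos := hS.re_innerF_dirichletLap_pos hb_nonneg hβp hβ hconn hΩne hf
    rw [show dirichletLap b (betaPlus b) Ω f = lam • f from funext hef, innerF_smul_left,
      innerF_self, re_mul_ofReal] at hpos
    exact pos_of_mul_pos_left hpos (sum_mul_normSq_pos (fun x : ↥Ω => hβp_pos x) hf).le
  · have : Nonempty ↥Ω := hΩ.coe_sort
    obtain ⟨lam, f, hf, heig, hlam⟩ :=
      (dirichletMatrix b Ω).exists_mulVec_eq_smul_card_mul_re_le_re_trace
    rw [trace_dirichletMatrix hb_loop, natCast_re] at hlam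
    refine ⟨lam, f, hf, fun x => ?_, ?_⟩
    · rw [hS.dirichletLap_eq_mulVec hβp, heig, Pi.smul_apply, smul_eq_mul]
    · exact le_of_mul_le_mul_left (by rwa [mul_one]) (Nat.cast_pos.2 Fintype.card_pos)

/-- Suppose the graph is connected and Assumption (β) holds, and let
`Ω ⊆ V` be finite, nonempty and `Ω ≠ V`. Then every eigenvalue `λ` of the Dirichlet
normalized Laplacian `Δ̃^D_Ω` satisfies `Re λ > 0`, and there exists an eigenvalue `λ`
of `Δ̃^D_Ω` with `Re λ ≤ 1`. -/
theorem dirichlet_eigenvalue_re_pos_and_exists_le_one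
    (V : Type*) [Countable V] [DecidableEq V] (b : V → V → ℝ)
    (hb_nonneg : ∀ x y, 0 ≤ b x y)
    (hb_loop : ∀ x, b x x = 0)
    (hloc_fin : ∀ x, {y | b x y ≠ 0 ∨ b y x ≠ 0}.Finite)
    (hβp_pos : ∀ x, 0 < betaPlus b x)
    (hβm_pos : ∀ x, 0 < betaMinus b x)
    (hβ : ∀ x, betaPlus b x = betaMinus b x)
    (hconn : GraphConnected b)
    (Ω : Finset V) (hΩ : Ω.Nonempty) (hΩne : ∃ v : V, v ∉ Ω) :
    (∀ (lam : ℂ) (f : ↥Ω → ℂ), f ≠ 0 →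
        (∀ x : ↥Ω, dirichletLap b (betaPlus b) Ω f x = lam * f x) → 0 < lam.re) ∧
    (∃ (lam : ℂ) (f : ↥Ω → ℂ), f ≠ 0 ∧
        (∀ x : ↥Ω, dirichletLap b (betaPlus b) Ω f x = lam * f x) ∧ lam.re ≤ 1) :=
  dirichlet_eigenvalue_re_pos_and_exists_le_one_general V b hb_nonneg hb_loop hloc_fin hβp_pos hβ
    hconn Ω hΩ hΩne
end

section
/- Suppose the graph is connected and Assumption (β) holds, and let Ω ⊆ V be finite, nonempty and Ω ≠ V. Then every eigenvalue λ of the Dirichlet normalized Laplacian Δ̃^D_Ω satisfies Re λ < 2. -/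
open Function Complex

/-- Suppose the graph is connected and Assumption (β) holds, and let
`Ω ⊆ V` be finite, nonempty and `Ω ≠ V`. Then every eigenvalue `λ` of the Dirichlet
normalized Laplacian `Δ̃^D_Ω` satisfies `Re λ < 2`. -/
theorem dirichlet_eigenvalue_re_lt_two
    (V : Type*) [Countable V] [DecidableEq V] (b : V → V → ℝ)
    (hb_nonneg : ∀ x y, 0 ≤ b x y)
    (hb_loop : ∀ x, b x x = 0)
    (hloc_fin : ∀ x, {y | b x y ≠ 0 ∨ b y x ≠ 0}.Finite)
    (hβp_pos : ∀ x, 0 < betaPlus b x)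
    (hβm_pos : ∀ x, 0 < betaMinus b x)
    (hβ : ∀ x, betaPlus b x = betaMinus b x)
    (hconn : GraphConnected b)
    (Ω : Finset V) (hΩ : Ω.Nonempty) (hΩne : ∃ v : V, v ∉ Ω)
    (lam : ℂ) (f : ↥Ω → ℂ) (hf : f ≠ 0)
    (heig : ∀ x : ↥Ω, dirichletLap b (betaPlus b) Ω f x = lam * f x) :
    lam.re < 2 := by
  classical
  set w : V → ℝ := betaPlus b with hw
  set g : V → ℂ := extendZero Ω f with hgdef
  have hg0 : ∀ x : V, x ∉ Ω → g x = 0 := by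
    intro x hx; simp [hgdef, extendZero, hx]
  have hgΩ : ∀ (x : V) (hx : x ∈ Ω), g x = f ⟨x, hx⟩ := by
    intro x hx; simp [hgdef, extendZero, hx]
  set T : V → Finset V := fun x => (hloc_fin x).toFinset with hT
  set S : Finset V := Ω ∪ Ω.biUnion T with hS
  have hΩS : Ω ⊆ S := Finset.subset_union_left
  have hTS : ∀ x ∈ Ω, T x ⊆ S := fun x hx =>
    (Finset.subset_biUnion_of_mem T hx).trans Finset.subset_union_right
  have hmemT : ∀ x y : V, b x y ≠ 0 → y ∈ T x ∧ x ∈ T y := by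
    intro x y h
    constructor <;> · simp [hT, Set.Finite.mem_toFinset]; tauto
  -- betaPlus / betaMinus as finite sums over S
  have hA : ∀ x ∈ Ω, ∑ y ∈ S, b x y = w x := by
    intro x hx
    rw [hw, betaPlus]
    refine (finsum_eq_sum_of_support_subset _ ?_).symm
    intro y hy
    exact hTS x hx ((hmemT x y hy).1)
  have hB : ∀ y ∈ Ω, ∑ x ∈ S, b x y = w y := by
    intro y hy
    rw [hβ y, betaMinus]
    refine (finsum_eq_sum_of_support_subset _ ?_).symm
    intro x hx
    exact hTS y hy ((hmemT x y hx).2)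
  have hwpos : ∀ x : V, 0 < w x := hβp_pos
  -- eigen equation with cleared denominator, as Finset sum
  have hC : ∀ (x : V) (hx : x ∈ Ω),
      ∑ y ∈ S, (b x y : ℂ) * (g x - g y) = lam * (w x : ℂ) * g x := by
    intro x hx
    have h1 : (1 / (w x : ℂ)) * ∑ᶠ y, (b x y : ℂ) * (g x - g y) = lam * f ⟨x, hx⟩ :=
      heig ⟨x, hx⟩
    have hsup : (Function.support fun y => (b x y : ℂ) * (g x - g y))
        ⊆ (S : Set V) := by
      intro y hy
      have hb : b x y ≠ 0 := by
        intro h0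
        apply hy; simp [h0]
      exact hTS x hx ((hmemT x y hb).1)
    rw [finsum_eq_sum_of_support_subset _ hsup] at h1
    have hwne : (w x : ℂ) ≠ 0 := by
      exact_mod_cast (hwpos x).ne'
    have hgx : g x = f ⟨x, hx⟩ := hgΩ x hx
    rw [← hgx] at h1
    rw [one_div_mul_eq_div, div_eq_iff hwne] at h1
    rw [h1]; ring
  -- basic real quantities
  set N : ℝ := ∑ x ∈ Ω, w x * Complex.normSq (g x) with hN
  have hNpos : 0 < N := by
    obtain ⟨x₀, hx₀⟩ := Function.ne_iff.mp hf
    refine Finset.sum_pos' (fun x hx => ?_) ⟨(x₀ : V), x₀.2, ?_⟩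
    · exact mul_nonneg (hwpos x).le (Complex.normSq_nonneg _)
    · have : g (x₀ : V) = f x₀ := by
        rw [hgΩ _ x₀.2]
      refine mul_pos (hwpos _) ?_
      rw [this]
      exact Complex.normSq_pos.mpr hx₀
  -- the complex double-sum identity
  have hmain : ∑ x ∈ S, (∑ y ∈ S, (b x y : ℂ) * (g x - g y)) * (starRingEnd ℂ) (g x)
      = lam * (N : ℂ) := by
    have h1 : ∑ x ∈ S, (∑ y ∈ S, (b x y : ℂ) * (g x - g y)) * (starRingEnd ℂ) (g x)
        = ∑ x ∈ Ω, (∑ y ∈ S, (b x y : ℂ) * (g x - g y)) * (starRingEnd ℂ) (g x) := by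
      refine (Finset.sum_subset hΩS (fun x _ hx => ?_)).symm
      rw [hg0 x hx]; simp
    rw [h1]
    have h2 : ∀ x ∈ Ω, (∑ y ∈ S, (b x y : ℂ) * (g x - g y)) * (starRingEnd ℂ) (g x)
        = lam * ((w x * Complex.normSq (g x) : ℝ) : ℂ) := by
      intro x hx
      rw [hC x hx, mul_assoc, Complex.mul_conj]
      push_cast
      ring
    rw [Finset.sum_congr rfl h2, ← Finset.mul_sum, hN]
    push_cast
    ring
  -- real part of main identity
  have hre : ∑ x ∈ S, ∑ y ∈ S,
      b x y * (Complex.normSq (g x) - ((g x).re * (g y).re + (g x).im * (g y).im))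
      = lam.re * N := by
    have := congrArg Complex.re hmain
    rw [Complex.mul_re] at this
    simp only [Complex.ofReal_re, Complex.ofReal_im, mul_zero, sub_zero] at this
    rw [← this, Complex.re_sum]
    refine Finset.sum_congr rfl fun x _ => ?_
    rw [Finset.sum_mul, Complex.re_sum]
    refine Finset.sum_congr rfl fun y _ => ?_
    simp [Complex.mul_re, Complex.mul_im, Complex.normSq_apply]
    ring
  -- the sum ∑∑ b x y * normSq (g x) = N
  have hD1 : ∑ x ∈ S, ∑ y ∈ S, b x y * Complex.normSq (g x) = N := by
    have h1 : ∑ x ∈ S, ∑ y ∈ S, b x y * Complex.normSq (g x)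
        = ∑ x ∈ Ω, ∑ y ∈ S, b x y * Complex.normSq (g x) := by
      refine (Finset.sum_subset hΩS (fun x _ hx => ?_)).symm
      rw [hg0 x hx]; simp
    rw [h1, hN]
    refine Finset.sum_congr rfl fun x hx => ?_
    rw [← Finset.sum_mul, hA x hx]
  have hD2 : ∑ x ∈ S, ∑ y ∈ S, b x y * Complex.normSq (g y) = N := by
    rw [Finset.sum_comm]
    have h1 : ∑ y ∈ S, ∑ x ∈ S, b x y * Complex.normSq (g y)
        = ∑ y ∈ Ω, ∑ x ∈ S, b x y * Complex.normSq (g y) := by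
      refine (Finset.sum_subset hΩS (fun y _ hy => ?_)).symm
      rw [hg0 y hy]; simp
    rw [h1, hN]
    refine Finset.sum_congr rfl fun y hy => ?_
    rw [← Finset.sum_mul, hB y hy]
  -- cross term
  set R : ℝ := ∑ x ∈ S, ∑ y ∈ S,
      b x y * ((g x).re * (g y).re + (g x).im * (g y).im) with hR
  have hRval : R = N - lam.re * N := by
    have : N - R = lam.re * N := by
      rw [← hre, ← hD1, hR, ← Finset.sum_sub_distrib]
      refine Finset.sum_congr rfl fun x _ => ?_
      rw [← Finset.sum_sub_distrib]
      refine Finset.sum_congr rfl fun y _ => ?_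
      ring
    linarith
  -- the nonnegative quantity P
  set P : ℝ := ∑ x ∈ S, ∑ y ∈ S, b x y * Complex.normSq (g x + g y) with hP
  have hPval : P = (4 - 2 * lam.re) * N := by
    have hexp : P = (∑ x ∈ S, ∑ y ∈ S, b x y * Complex.normSq (g x))
        + (∑ x ∈ S, ∑ y ∈ S, b x y * Complex.normSq (g y)) + 2 * R := by
      rw [hP, hR, Finset.mul_sum, ← Finset.sum_add_distrib, ← Finset.sum_add_distrib]
      refine Finset.sum_congr rfl fun x _ => ?_
      rw [Finset.mul_sum, ← Finset.sum_add_distrib, ← Finset.sum_add_distrib]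
      refine Finset.sum_congr rfl fun y _ => ?_
      simp [Complex.normSq_apply, Complex.add_re, Complex.add_im]
      ring
    rw [hexp, hD1, hD2, hRval]; ring
  have hPnonneg : 0 ≤ P := by
    refine Finset.sum_nonneg fun x _ => Finset.sum_nonneg fun y _ => ?_
    exact mul_nonneg (hb_nonneg x y) (Complex.normSq_nonneg _)
  -- P ≠ 0 via connectedness
  have hPne : P ≠ 0 := by
    intro hP0
    have hterm : ∀ x ∈ S, ∀ y ∈ S, b x y * Complex.normSq (g x + g y) = 0 := by
      intro x hx y hy
      have h1 : ∀ x ∈ S, (0:ℝ) ≤ ∑ y ∈ S, b x y * Complex.normSq (g x + g y) :=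
        fun x _ => Finset.sum_nonneg fun y _ =>
          mul_nonneg (hb_nonneg x y) (Complex.normSq_nonneg _)
      have h2 := (Finset.sum_eq_zero_iff_of_nonneg h1).mp hP0 x hx
      have h3 : ∀ y ∈ S, (0:ℝ) ≤ b x y * Complex.normSq (g x + g y) :=
        fun y _ => mul_nonneg (hb_nonneg x y) (Complex.normSq_nonneg _)
      exact (Finset.sum_eq_zero_iff_of_nonneg h3).mp h2 y hy
    have hstep : ∀ x y : V, b x y ≠ 0 → g x + g y = 0 := by
      intro x y hb
      by_cases hx : x ∈ Ω
      · have hyS : y ∈ S := hTS x hx (hmemT x y hb).1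
        have := hterm x (hΩS hx) y hyS
        rcases mul_eq_zero.mp this with h | h
        · exact absurd h hb
        · exact Complex.normSq_eq_zero.mp h
      · by_cases hy : y ∈ Ω
        · have hxS : x ∈ S := hTS y hy (hmemT x y hb).2
          have := hterm x hxS y (hΩS hy)
          rcases mul_eq_zero.mp this with h | h
          · exact absurd h hb
          · exact Complex.normSq_eq_zero.mp h
        · rw [hg0 x hx, hg0 y hy]; simp
    obtain ⟨v, hv⟩ := hΩne
    obtain ⟨x₀, hx₀⟩ := Function.ne_iff.mp hf
    obtain ⟨k, c, hc0, hck, hcs⟩ := hconn v (x₀ : V)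
    have hchain : ∀ i ≤ k, g (c i) = 0 := by
      intro i
      induction i with
      | zero => intro _; rw [hc0]; exact hg0 v hv
      | succ n ih =>
        intro hnk
        have hn : n ≤ k := Nat.le_of_succ_le hnk
        have hlt : n < k := hnk
        have hpos := hcs n hlt
        have hbne : b (c n) (c (n+1)) ≠ 0 ∨ b (c (n+1)) (c n) ≠ 0 := by
          by_contra h
          push_neg at h
          rw [h.1, h.2] at hpos
          simp at hpos
        have hzero : g (c n) + g (c (n+1)) = 0 := by
          rcases hbne with h | h
          · exact hstep _ _ h
          · have := hstep _ _ h
            linear_combination this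
        have := ih hn
        rw [this, zero_add] at hzero
        exact hzero
    have hgx₀ : g (x₀ : V) = 0 := by rw [← hck]; exact hchain k le_rfl
    rw [hgΩ _ x₀.2] at hgx₀
    exact hx₀ hgx₀
  have hPpos : 0 < P := lt_of_le_of_ne hPnonneg (Ne.symm hPne)
  nlinarith [hPpos, hNpos, hPval]
end

section
/- Under Assumption (β), the Laplacian Δ, viewed as a densely defined unbounded operator (partial linear map) in the Hilbert space ℓ²(V, m) with domain the finitely supported functions C_c(V), is closable. -/
open Function Complex

set_option synthInstance.maxHeartbeats 1000000 in
set_option maxHeartbeats 2000000 in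
/-- Under Assumption (β), the Laplacian `Δ`, viewed as a densely defined
unbounded operator (partial linear map) in the Hilbert space `ℓ²(V, m)` (realized as the
standard `ℓ²(V)` via the isometry `f ↦ √m · f`) with domain the finitely supported
functions `C_c(V)`, is closable. -/
theorem laplacian_closable
    (V : Type*) [Countable V] (b : V → V → ℝ) (m : V → ℝ)
    (hb_nonneg : ∀ x y, 0 ≤ b x y)
    (hb_loop : ∀ x, b x x = 0)
    (hloc_fin : ∀ x, {y | b x y ≠ 0 ∨ b y x ≠ 0}.Finite)
    (hm_pos : ∀ x, 0 < m x)
    (hβp_pos : ∀ x, 0 < betaPlus b x)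
    (hβm_pos : ∀ x, 0 < betaMinus b x)
    (hβ : ∀ x, betaPlus b x = betaMinus b x)
    (T : lp (fun _ : V => ℂ) 2 →ₗ.[ℂ] lp (fun _ : V => ℂ) 2)
    (hdom : ∀ u : lp (fun _ : V => ℂ) 2,
        u ∈ T.domain ↔ (support (↑u : V → ℂ)).Finite)
    (hact : ∀ (u : T.domain) (f : V → ℂ), (support f).Finite →
        ((↑u : lp (fun _ : V => ℂ) 2) : V → ℂ) = weightEmbed m f →
        ((T u : lp (fun _ : V => ℂ) 2) : V → ℂ) = weightEmbed m (lap b m f)) :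
    T.IsClosable := by
  classical
  -- Key: pointwise formula for T on its domain, as a finite linear combination of coordinates.
  have key : ∀ (u : T.domain) (x : V),
      ((T u : lp (fun _ : V => ℂ) 2) : V → ℂ) x = ((Real.sqrt (m x) : ℂ)) * ((1 / (m x : ℂ)) *
        ∑ y ∈ (hloc_fin x).toFinset, (b x y : ℂ) *
          (((Real.sqrt (m x) : ℂ))⁻¹ * ((u : lp (fun _ : V => ℂ) 2) : V → ℂ) x
            - ((Real.sqrt (m y) : ℂ))⁻¹ * ((u : lp (fun _ : V => ℂ) 2) : V → ℂ) y)) := by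
    intro u x
    set g : V → ℂ := fun z => ((Real.sqrt (m z) : ℂ))⁻¹ * ((u : lp (fun _ : V => ℂ) 2) : V → ℂ) z with hg
    have hsqrt_ne : ∀ z, (Real.sqrt (m z) : ℂ) ≠ 0 := by
      intro z
      simp only [ne_eq, Complex.ofReal_eq_zero]
      exact (Real.sqrt_pos.2 (hm_pos z)).ne'
    have hgsupp : (support g).Finite := by
      apply ((hdom (u : lp (fun _ : V => ℂ) 2)).1 u.2).subset
      intro z hz
      simp only [mem_support, hg] at hz ⊢
      exact fun h => hz (by simp [h])
    have hrep : ((u : lp (fun _ : V => ℂ) 2) : V → ℂ) = weightEmbed m g := by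
      funext z
      simp only [weightEmbed, hg]
      rw [← mul_assoc, mul_inv_cancel₀ (hsqrt_ne z), one_mul]
    have h1 := hact u g hgsupp hrep
    have h2 : ((T u : lp (fun _ : V => ℂ) 2) : V → ℂ) x = (Real.sqrt (m x) : ℂ) * lap b m g x := by
      rw [h1]; rfl
    rw [h2, lap]
    congr 1
    congr 1
    apply finsum_eq_finset_sum_of_support_subset
    intro y hy
    simp only [mem_support] at hy
    simp only [Set.Finite.coe_toFinset, Set.mem_setOf_eq]
    left
    intro hb0
    exact hy (by simp [hb0])
  -- pointwise convergence from lp-convergence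
  have ptwise : ∀ (w : ℕ → lp (fun _ : V => ℂ) 2) (l : lp (fun _ : V => ℂ) 2), Filter.Tendsto w Filter.atTop (nhds l) →
      ∀ z : V, Filter.Tendsto (fun n => ((w n : lp (fun _ : V => ℂ) 2) : V → ℂ) z) Filter.atTop
        (nhds ((l : V → ℂ) z)) := by
    intro w l hw z
    rw [tendsto_iff_norm_sub_tendsto_zero]
    have hbd : ∀ n, ‖((w n : lp (fun _ : V => ℂ) 2) : V → ℂ) z - (l : V → ℂ) z‖ ≤ ‖w n - l‖ := by
      intro n
      have := lp.norm_apply_le_norm (p := 2) two_ne_zero (w n - l) z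
      rwa [lp.coeFn_sub, Pi.sub_apply] at this
    have h0 : Filter.Tendsto (fun n => ‖w n - l‖) Filter.atTop (nhds 0) := by
      rw [← tendsto_iff_norm_sub_tendsto_zero]
      exact hw
    exact squeeze_zero (fun n => norm_nonneg _) hbd h0
  -- closability
  refine ⟨T.graph.topologicalClosure.toLinearPMap, (Submodule.toLinearPMap_graph_eq _ ?_).symm⟩
  rintro ⟨p1, p2⟩ hp hp1
  simp only at hp1
  subst hp1
  have hp' : ((0 : lp (fun _ : V => ℂ) 2), p2) ∈ closure (T.graph : Set (lp (fun _ : V => ℂ) 2 × lp (fun _ : V => ℂ) 2)) := hp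
  rw [mem_closure_iff_seq_limit] at hp'
  obtain ⟨a, ha_mem, ha_lim⟩ := hp'
  have hex : ∀ n, ∃ y : T.domain, (↑y : lp (fun _ : V => ℂ) 2) = (a n).1 ∧ T y = (a n).2 :=
    fun n => T.mem_graph_iff.1 (ha_mem n)
  choose u hu1 hu2 using hex
  have hfst : Filter.Tendsto (fun n => ((u n : lp (fun _ : V => ℂ) 2) : lp (fun _ : V => ℂ) 2)) Filter.atTop (nhds (0 : lp (fun _ : V => ℂ) 2)) := by
    have := (continuous_fst.tendsto ((0 : lp (fun _ : V => ℂ) 2), p2)).comp ha_lim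
    simp only [Function.comp_def] at this
    convert this using 2 with n
    exact hu1 n
  have hsnd : Filter.Tendsto (fun n => (T (u n) : lp (fun _ : V => ℂ) 2)) Filter.atTop (nhds p2) := by
    have := (continuous_snd.tendsto ((0 : lp (fun _ : V => ℂ) 2), p2)).comp ha_lim
    simp only [Function.comp_def] at this
    convert this using 2 with n
    exact hu2 n
  have hcoord : ∀ z : V, Filter.Tendsto (fun n => (((u n : lp (fun _ : V => ℂ) 2) : lp (fun _ : V => ℂ) 2) : V → ℂ) z)
      Filter.atTop (nhds 0) := by
    intro z
    have := ptwise _ _ hfst z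
    rwa [lp.coeFn_zero, Pi.zero_apply] at this
  rw [lp.eq_zero_iff_coeFn_eq_zero]
  funext x
  have h1 : Filter.Tendsto (fun n => ((T (u n) : lp (fun _ : V => ℂ) 2) : V → ℂ) x) Filter.atTop
      (nhds ((p2 : V → ℂ) x)) := ptwise _ _ hsnd x
  have h2 : Filter.Tendsto (fun n => ((T (u n) : lp (fun _ : V => ℂ) 2) : V → ℂ) x) Filter.atTop (nhds 0) := by
    simp only [key]
    have hsum : Filter.Tendsto (fun n => ∑ y ∈ (hloc_fin x).toFinset, (b x y : ℂ) *
        (((Real.sqrt (m x) : ℂ))⁻¹ * (((u n : lp (fun _ : V => ℂ) 2) : lp (fun _ : V => ℂ) 2) : V → ℂ) x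
          - ((Real.sqrt (m y) : ℂ))⁻¹ * (((u n : lp (fun _ : V => ℂ) 2) : lp (fun _ : V => ℂ) 2) : V → ℂ) y))
        Filter.atTop (nhds 0) := by
      have : Filter.Tendsto (fun n => ∑ y ∈ (hloc_fin x).toFinset, (b x y : ℂ) *
          (((Real.sqrt (m x) : ℂ))⁻¹ * (((u n : lp (fun _ : V => ℂ) 2) : lp (fun _ : V => ℂ) 2) : V → ℂ) x
            - ((Real.sqrt (m y) : ℂ))⁻¹ * (((u n : lp (fun _ : V => ℂ) 2) : lp (fun _ : V => ℂ) 2) : V → ℂ) y))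
          Filter.atTop (nhds (∑ y ∈ (hloc_fin x).toFinset, (0 : ℂ))) := by
        apply tendsto_finset_sum
        intro y _
        have hx0 := (hcoord x).const_mul ((Real.sqrt (m x) : ℂ))⁻¹
        have hy0 := (hcoord y).const_mul ((Real.sqrt (m y) : ℂ))⁻¹
        rw [mul_zero] at hx0 hy0
        have := (hx0.sub hy0).const_mul ((b x y : ℂ))
        simpa using this
      simpa using this
    have := (hsum.const_mul ((1 : ℂ) / (m x : ℂ))).const_mul ((Real.sqrt (m x) : ℂ))
    simpa using this
  rw [Pi.zero_apply]
  exact tendsto_nhds_unique h1 h2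
end
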